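/- arXiv:1307.7821 — 5 statements merged into one kernel-verified Lean document; each statement's English description precedes it below -/
import Mathlib

section
/- Every majority (+) cluster of a family S of cluster collections is a frequency difference cluster of S. -/
/-- Two clusters are compatible if one contains the other or they are disjoint. -/
def Compatible {α : Type*} [DecidableEq α] (C D : Finset α) : Prop :=
  C ⊆ D ∨ D ⊆ C ∨ C ∩ D = ∅

instance {α : Type*} [DecidableEq α] (C D : Finset α) : Decidable (Compatible C D) := by
  unfold Compatible; infer_instance

/-- A family of clusters is laminar if its members are pairwise compatible. -/
def Laminar {α : Type*} [DecidableEq α] (F : Finset (Finset α)) : Prop :=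
  ∀ C ∈ F, ∀ D ∈ F, Compatible C D

/-- Number of collections in the family `S` in which the cluster `C` occurs. -/
def Kcard {α : Type*} [DecidableEq α] {k : ℕ} (S : Fin k → Finset (Finset α)) (C : Finset α) : ℕ :=
  (Finset.univ.filter fun i => C ∈ S i).card

/-- Number of collections in the family `S` containing a cluster incompatible with `C`. -/
def Qcard {α : Type*} [DecidableEq α] {k : ℕ} (S : Fin k → Finset (Finset α)) (C : Finset α) : ℕ :=
  (Finset.univ.filter fun i => ∃ D ∈ S i, ¬ Compatible C D).card

/-- Every majority (+) cluster of a family `S` of laminar cluster collections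
is a frequency difference cluster of `S`. -/
theorem majority_plus_is_frequency_difference {α : Type*} [DecidableEq α] {k : ℕ}
    (L : Finset α) (S : Fin k → Finset (Finset α))
    (hLam : ∀ i, Laminar (S i))
    (hS : ∀ i, ∀ C ∈ S i, C ⊆ L ∧ C.Nonempty)
    (C : Finset α) (hC : C ⊆ L) (hCne : C.Nonempty)
    (hmajp : Kcard S C > Qcard S C) :
    ∀ D : Finset α, D ⊆ L → D.Nonempty → ¬ Compatible C D →
      Kcard S C > Kcard S D := by
  intro D _ _ hinc
  have h : Kcard S D ≤ Qcard S C := by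
    apply Finset.card_le_card
    intro i hi
    simp only [Finset.mem_filter, Finset.mem_univ, true_and] at *
    exact ⟨D, hi, hinc⟩
  omega
end

section
/- If C is a majority cluster of S (occurring in more than half of the k cluster collections), then C is a frequency difference cluster of S. -/
/-- Every majority cluster of `S` (occurring in more than half of the `k`
collections) is a frequency difference cluster of `S`. -/
theorem majority_is_frequency_difference {α : Type*} [DecidableEq α] {k : ℕ}
    (L : Finset α) (S : Fin k → Finset (Finset α))
    (hLam : ∀ i, Laminar (S i))
    (hS : ∀ i, ∀ C ∈ S i, C ⊆ L ∧ C.Nonempty)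
    (C : Finset α) (hC : C ⊆ L) (hCne : C.Nonempty)
    (hmaj : 2 * Kcard S C > k) :
    ∀ D : Finset α, D ⊆ L → D.Nonempty → ¬ Compatible C D →
      Kcard S C > Kcard S D := by
  intro D hDL hDne hinc
  have hdisj : Disjoint (Finset.univ.filter fun i => C ∈ S i)
      (Finset.univ.filter fun i => D ∈ S i) := by
    rw [Finset.disjoint_left]
    intro i hiC hiD
    simp only [Finset.mem_filter] at hiC hiD
    exact hinc (hLam i C hiC.2 D hiD.2)
  have hsum : Kcard S C + Kcard S D ≤ k := by
    have := Finset.card_union_of_disjoint hdisj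
    calc Kcard S C + Kcard S D = _ := this.symm
      _ ≤ (Finset.univ : Finset (Fin k)).card := Finset.card_le_card (by simp)
      _ = k := by simp
  omega
end

section
/- The set of all majority (+) clusters of S is pairwise compatible, i.e., forms a laminar family (and hence is the cluster collection of a tree). -/
lemma Compatible.symm' {α : Type*} [DecidableEq α] {C D : Finset α}
    (h : Compatible C D) : Compatible D C := by
  rcases h with h | h | h
  · exact Or.inr (Or.inl h)
  · exact Or.inl h
  · exact Or.inr (Or.inr (by rwa [Finset.inter_comm]))

/-- Any two majority (+) clusters of `S` are compatible, i.e. the set of all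
majority (+) clusters forms a laminar family. -/
theorem majority_plus_pairwise_compatible {α : Type*} [DecidableEq α] {k : ℕ}
    (L : Finset α) (S : Fin k → Finset (Finset α))
    (hLam : ∀ i, Laminar (S i))
    (hS : ∀ i, ∀ C ∈ S i, C ⊆ L ∧ C.Nonempty)
    (C D : Finset α) (hC : C ⊆ L) (hCne : C.Nonempty) (hD : D ⊆ L) (hDne : D.Nonempty)
    (hCmajp : Kcard S C > Qcard S C) (hDmajp : Kcard S D > Qcard S D) :
    Compatible C D := by
  by_contra hnc
  have h1 : Kcard S C ≤ Qcard S D := by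
    apply Finset.card_le_card
    intro i hi
    simp only [Finset.mem_filter, Finset.mem_univ, true_and] at hi ⊢
    exact ⟨C, hi, fun h => hnc h.symm'⟩
  have h2 : Kcard S D ≤ Qcard S C := by
    apply Finset.card_le_card
    intro i hi
    simp only [Finset.mem_filter, Finset.mem_univ, true_and] at hi ⊢
    exact ⟨D, hi, hnc⟩
  omega
end

section
/- Let T be a rooted tree with leaf label set Λ(T), let X be a cluster of Λ(T), and let r_X be the lowest common ancestor in T of the leaves in X. For any node v of T, the cluster Λ(T[v]) of leaf descendants of v is incompatible with X if and only if (1) v is a proper descendant of r_X lying on a path from a child of r_X to some leaf in X, and (2) Λ(T[v]) is not a subset of X. -/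
/-- Rooted, unordered (modelled as ordered), leaf-labelled trees. -/
inductive PTree (α : Type) where
  | leaf : α → PTree α
  | node : List (PTree α) → PTree α

/-- The set of leaf labels of a tree. -/
def PTree.leaves {α : Type} [DecidableEq α] : PTree α → Finset α
  | .leaf a => {a}
  | .node ts => ts.attach.foldr (fun t acc => PTree.leaves t.1 ∪ acc) ∅
decreasing_by
  have := List.sizeOf_lt_of_mem t.2
  simp only [PTree.node.sizeOf_spec] at *
  omega

/-- The list of children of the root of a tree. -/
def PTree.children {α : Type} : PTree α → List (PTree α)
  | .leaf _ => []
  | .node ts => ts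

/-- A phylogenetic tree: every internal node has at least two children and
all leaves carry distinct labels (sibling subtrees have disjoint leaf sets). -/
inductive PTree.WF {α : Type} [DecidableEq α] : PTree α → Prop
  | leaf (a : α) : PTree.WF (.leaf a)
  | node (ts : List (PTree α)) :
      2 ≤ ts.length →
      ts.Pairwise (fun s t => Disjoint s.leaves t.leaves) →
      (∀ t ∈ ts, PTree.WF t) →
      PTree.WF (.node ts)

/-- `IsSubtree u t` holds when `u` is (the subtree rooted at) a node of `t`. -/
inductive PTree.IsSubtree {α : Type} : PTree α → PTree α → Prop
  | refl (t : PTree α) : PTree.IsSubtree t t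
  | step (u t : PTree α) (ts : List (PTree α)) :
      PTree.IsSubtree u t → t ∈ ts → PTree.IsSubtree u (.node ts)

/-- `r` is the lowest common ancestor in `T` of the leaves labelled by `X`:
`r` is a node of `T` whose leaf set contains `X`, below every node of `T`
whose leaf set contains `X`. -/
def PTree.IsLCA {α : Type} [DecidableEq α] (T : PTree α) (X : Finset α) (r : PTree α) : Prop :=
  r.IsSubtree T ∧ X ⊆ r.leaves ∧ ∀ s : PTree α, s.IsSubtree T → X ⊆ s.leaves → r.IsSubtree s

/-! The clusters of the nodes of a phylogenetic tree form a laminar family: two nodes are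
nested or have disjoint leaf sets. A node `v` whose cluster is incompatible with `X` meets
`X ⊆ Λ(T[r_X])`, so it is nested with `r_X`; it cannot lie above `r_X`, since then it would
contain `X`, so it lies strictly below. Conversely, a node strictly below `r_X` cannot
contain `X`, by minimality of `r_X`. -/

namespace PTree

variable {α : Type}

theorem leaves_node [DecidableEq α] (ts : List (PTree α)) :
    (node ts).leaves = ts.foldr (fun t acc => t.leaves ∪ acc) ∅ := by
  rw [leaves]
  exact List.foldr_attach (f := fun (t : PTree α) (acc : Finset α) => t.leaves ∪ acc)

theorem mem_leaves_node [DecidableEq α] {a : α} {ts : List (PTree α)} :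
    a ∈ (node ts).leaves ↔ ∃ t ∈ ts, a ∈ t.leaves := by
  rw [leaves_node]
  induction ts with
  | nil => simp
  | cons t ts ih => simp [ih]

namespace IsSubtree

theorem leaves_subset [DecidableEq α] {u t : PTree α} (h : u.IsSubtree t) :
    u.leaves ⊆ t.leaves := by
  induction h with
  | refl => exact Finset.Subset.refl _
  | step t ts _ ht ih => exact fun a ha => mem_leaves_node.2 ⟨t, ht, ih ha⟩

theorem sizeOf_le {u t : PTree α} (h : u.IsSubtree t) : sizeOf u ≤ sizeOf t := by
  induction h with
  | refl => exact le_refl _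
  | step t ts _ ht ih =>
    have := List.sizeOf_lt_of_mem ht
    simp only [node.sizeOf_spec]
    omega

theorem antisymm {u t : PTree α} (h₁ : u.IsSubtree t) (h₂ : t.IsSubtree u) : u = t := by
  cases h₁ with
  | refl => rfl
  | step s ts hs hmem =>
    have := hs.sizeOf_le
    have := h₂.sizeOf_le
    have := List.sizeOf_lt_of_mem hmem
    simp only [node.sizeOf_spec] at *
    omega

end IsSubtree

theorem WF.isSubtree_or_isSubtree_or_disjoint [DecidableEq α] {T : PTree α} (hT : T.WF)
    {u v : PTree α} (hu : u.IsSubtree T) (hv : v.IsSubtree T) :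
    u.IsSubtree v ∨ v.IsSubtree u ∨ Disjoint u.leaves v.leaves := by
  induction hT generalizing u v with
  | leaf a =>
    cases hu
    cases hv
    exact .inl (.refl _)
  | node ts _ hdisj _ ih =>
    cases hu with
    | refl => exact .inr (.inl hv)
    | step s _ hus hs =>
      cases hv with
      | refl => exact .inl (.step _ _ _ hus hs)
      | step s' _ hvs' hs' =>
        by_cases hss : s = s'
        · subst hss
          exact ih s hs hus hvs'
        · have : Std.Symm (fun s t : PTree α => Disjoint s.leaves t.leaves) :=
            ⟨fun _ _ h => h.symm⟩
          exact .inr <| .inr <|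
            (hdisj.forall hs hs' hss).mono hus.leaves_subset hvs'.leaves_subset

theorem IsLCA.eq_of_isSubtree_of_subset [DecidableEq α] {T r v : PTree α} {X : Finset α}
    (hr : T.IsLCA X r) (hv : v.IsSubtree T) (hvr : v.IsSubtree r) (hXv : X ⊆ v.leaves) :
    v = r :=
  hvr.antisymm (hr.2.2 v hv hXv)

end PTree

theorem incompatible_iff_on_path_general {α : Type} [DecidableEq α]
    (T : PTree α) (hT : T.WF) (X : Finset α)
    (r : PTree α) (hr : T.IsLCA X r)
    (v : PTree α) (hv : v.IsSubtree T) :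
    ¬ Compatible X v.leaves ↔
      ((v.IsSubtree r ∧ v ≠ r ∧ (v.leaves ∩ X).Nonempty) ∧ ¬ v.leaves ⊆ X) := by
  simp only [Compatible, not_or, ← Finset.not_nonempty_iff_eq_empty, not_not, Finset.inter_comm X]
  constructor
  · rintro ⟨hXv, hvX, a, ha⟩
    obtain ⟨hav, haX⟩ := Finset.mem_inter.1 ha
    have hXr := hr.2.1
    rcases hT.isSubtree_or_isSubtree_or_disjoint hv hr.1 with hvr | hrv | hdisj
    · exact ⟨⟨hvr, by rintro rfl; exact hXv hXr, a, ha⟩, hvX⟩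
    · exact absurd (hXr.trans hrv.leaves_subset) hXv
    · exact absurd (hXr haX) (Finset.disjoint_left.1 hdisj hav)
  · rintro ⟨⟨hvr, hvr_ne, hvX_ne⟩, hvX⟩
    exact ⟨fun hXv => hvr_ne (hr.eq_of_isSubtree_of_subset hv hvr hXv), hvX, hvX_ne⟩

/-- Lemma 5 of the paper: for a node `v` of `T`, the cluster `Λ(T[v])` is
incompatible with `X` if and only if (1) `v` is a proper descendant of
`r_X = lca_T(X)` having a leaf descendant in `X` (i.e. `v` lies on a path from a
child of `r_X` to some leaf in `X`), and (2) `Λ(T[v]) ⊄ X`. -/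
theorem incompatible_iff_on_path {α : Type} [DecidableEq α]
    (T : PTree α) (hT : T.WF) (X : Finset α) (hX : X ⊆ T.leaves) (hXne : X.Nonempty)
    (r : PTree α) (hr : T.IsLCA X r)
    (v : PTree α) (hv : v.IsSubtree T) :
    ¬ Compatible X v.leaves ↔
      ((v.IsSubtree r ∧ v ≠ r ∧ (v.leaves ∩ X).Nonempty) ∧ ¬ v.leaves ⊆ X) :=
  incompatible_iff_on_path_general T hT X r hr v hv
end

section
/- Let w : P(L) → ℕ be a weight function on clusters of L, and let A and B be laminar families over L. Define A' = {C ∈ A : w(C) > w(D) for every D ∈ B with C incompatible with D} and B' = {C ∈ B : w(C) > w(D) for every D ∈ A with C incompatible with D}. Then every member of A' is compatible with every member of B', and hence A' ∪ B' is laminar. -/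
/-- Key correctness lemma for `Filter_Clusters`: given a weight function `w` on
clusters and laminar families `A`, `B`, keeping in `A` (resp. `B`) only the clusters
that outweigh every incompatible cluster of the other family yields two mutually
compatible families, whose union is laminar. -/
theorem filter_clusters_compatible {α : Type*} [DecidableEq α]
    (L : Finset α) (w : Finset α → ℕ) (A B : Finset (Finset α))
    (hLamA : Laminar A) (hLamB : Laminar B)
    (hA : ∀ C ∈ A, C ⊆ L ∧ C.Nonempty) (hB : ∀ C ∈ B, C ⊆ L ∧ C.Nonempty) :
    (∀ C ∈ A.filter (fun C => ∀ D ∈ B, ¬ Compatible C D → w D < w C),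
      ∀ D ∈ B.filter (fun D => ∀ C' ∈ A, ¬ Compatible D C' → w C' < w D),
        Compatible C D)
    ∧
    Laminar ((A.filter (fun C => ∀ D ∈ B, ¬ Compatible C D → w D < w C)) ∪
             (B.filter (fun D => ∀ C' ∈ A, ¬ Compatible D C' → w C' < w D))) := by
  
  have key : ∀ C ∈ A.filter (fun C => ∀ D ∈ B, ¬ Compatible C D → w D < w C),
      ∀ D ∈ B.filter (fun D => ∀ C' ∈ A, ¬ Compatible D C' → w C' < w D),
        Compatible C D := by
    intro C hC D hD
    simp only [Finset.mem_filter] at hC hD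
    by_contra hcomp
    have h1 := hC.2 D hD.1 hcomp
    have h2 := hD.2 C hC.1 (fun h => hcomp h.symm')
    omega
  refine ⟨key, ?_⟩
  intro C hC D hD
  rw [Finset.mem_union] at hC hD
  rcases hC with hC | hC <;> rcases hD with hD | hD
  · exact hLamA _ (Finset.mem_filter.mp hC).1 _ (Finset.mem_filter.mp hD).1
  · exact key _ hC _ hD
  · exact (key _ hD _ hC).symm'
  · exact hLamB _ (Finset.mem_filter.mp hC).1 _ (Finset.mem_filter.mp hD).1
end
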